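/- Define Ψ(α) = [ (1+α)·( (5−α)·arccot(√α) + √α·ln((1+α)/4) ) − (π/2)·(5 − 4√α + α)·(1 − 2√α − α) ] / [ (√α/(1+α))·(25 − 6α + α²) ] for α > 0, where arccot(t) = π/2 − arctan(t). Define f(x) = Ψ(8/(π(1+√x)) − 1) + Ψ(8/(π(1+1/√x)) − 1). Then for every x with (π/(π−8))² < x < ((π−8)/π)², one has f(x) ≤ f(1) = 2·Ψ(4/π − 1); i.e., the bounded FD-over-HD spectral efficiency gain is maximized at transmit power ratio x* = p^{(d)}/p^{(u)} = 1. -/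

import Mathlib

/-!
`Ψ` is concave on `(0, 0.55)`: its second derivative is negative there, which after the bounds
`arctan t ≥ t - t³/3`, `π < 3.15` and `log y ≤ y - 1` reduces to a polynomial inequality.
For every admissible `x` the two arguments of `Ψ` in `f x` are positive and add up to `8/π - 2`,
which does not depend on `x` and is below `0.55`. The midpoint inequality for concave functions
then gives `f x ≤ 2 Ψ(4/π - 1) = f 1`.
-/

open Real

/-- The function Ψ of the paper (eq. SE_SC_APPROX_FUNC), with
arccot t = π/2 − arctan t. -/
noncomputable def Psi (α : ℝ) : ℝ :=
  ((1 + α) * ((5 - α) * (π / 2 - Real.arctan (Real.sqrt α)) +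
      Real.sqrt α * Real.log ((1 + α) / 4)) -
    (π / 2) * (5 - 4 * Real.sqrt α + α) * (1 - 2 * Real.sqrt α - α)) /
    ((Real.sqrt α / (1 + α)) * (25 - 6 * α + α ^ 2))

/-- Bounded FD-over-HD SE gain objective of Lemma 7 (up to constants). -/
noncomputable def fGain (x : ℝ) : ℝ :=
  Psi (8 / (π * (1 + Real.sqrt x)) - 1) +
    Psi (8 / (π * (1 + 1 / Real.sqrt x)) - 1)

theorem hasDerivAt_arctan_sqrt {x : ℝ} (hx : 0 < x) :
    HasDerivAt (fun y => arctan √y) (1 / (2 * √x * (1 + x))) x := by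
  convert (hasDerivAt_sqrt hx.ne').arctan using 1
  rw [sq_sqrt hx.le]
  field_simp

theorem hasDerivAt_log_one_add_div {x c : ℝ} (hx : 1 + x ≠ 0) (hc : c ≠ 0) :
    HasDerivAt (fun y => log ((1 + y) / c)) (1 / (1 + x)) x := by
  convert ((hasDerivAt_id' x).const_add 1 |>.div_const c).log (div_ne_zero hx hc) using 1
  field_simp

theorem sub_pow_three_div_three_le_arctan {x : ℝ} (hx : 0 ≤ x) : x - x ^ 3 / 3 ≤ arctan x := by
  have hderiv (t : ℝ) : HasDerivAt (fun t => arctan t - (t - t ^ 3 / 3)) (t ^ 4 / (1 + t ^ 2)) t := by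
    refine ((hasDerivAt_arctan t).fun_sub ((hasDerivAt_id' t).fun_sub
      ((hasDerivAt_pow 3 t).div_const 3))).congr_deriv ?_
    field_simp
    ring
  simpa using monotone_of_hasDerivAt_nonneg hderiv (fun t => by positivity) hx

theorem ConcaveOn.add_le_two_mul_map_add_div_two {s : Set ℝ} {f : ℝ → ℝ} (hf : ConcaveOn ℝ s f)
    {a b : ℝ} (ha : a ∈ s) (hb : b ∈ s) : f a + f b ≤ 2 * f ((a + b) / 2) := by
  have hjensen := hf.2 ha hb (by norm_num : (0 : ℝ) ≤ 1 / 2) (by norm_num : (0 : ℝ) ≤ 1 / 2)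
    (by norm_num)
  simp only [smul_eq_mul] at hjensen
  rw [show (a + b) / 2 = 1 / 2 * a + 1 / 2 * b by ring]
  linarith

theorem div_one_add_add_div_one_add_one_div (c : ℝ) {t : ℝ} (ht : 0 < t) :
    c / (1 + t) + c / (1 + 1 / t) = c := by
  field_simp
  ring

theorem div_mul_one_add_sub_one_pos {k p t : ℝ} (hp : 0 < p) (ht0 : 0 ≤ t) (ht : t < (k - p) / p) :
    0 < k / (p * (1 + t)) - 1 := by
  rw [lt_div_iff₀ hp] at ht
  rw [sub_pos, one_lt_div (by positivity)]
  linarith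

noncomputable def Psi' (a : ℝ) : ℝ :=
  (125 - 315 * a - 254 * a ^ 2 + 170 * a ^ 3 - 15 * a ^ 4 + a ^ 5) /
      (2 * √a ^ 3 * (a ^ 2 - 6 * a + 25) ^ 2) * arctan √a +
    64 * π * (3 - a) / (a ^ 2 - 6 * a + 25) ^ 2 +
    (112 + 96 * a - 16 * a ^ 2) / (2 * (a ^ 2 - 6 * a + 25) ^ 2) * log ((1 + a) / 4) +
    (3 * a ^ 2 - 2 * a - 5) / (2 * a * (a ^ 2 - 6 * a + 25))

theorem hasDerivAt_Psi {a : ℝ} (ha : 0 < a) : HasDerivAt Psi (Psi' a) a := by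
  have hs : 0 < √a := sqrt_pos.2 ha
  have hQ : 0 < 25 - 6 * a + a ^ 2 := by nlinarith [sq_nonneg (a - 3)]
  have hx := hasDerivAt_id' (x := a)
  have hsqrt := hasDerivAt_sqrt ha.ne'
  have hlog := hasDerivAt_log_one_add_div (c := 4) (by positivity : 1 + a ≠ 0) four_ne_zero
  have hnum := ((hx.const_add 1).fun_mul (((hx.const_sub 5).fun_mul
      ((hasDerivAt_arctan_sqrt ha).const_sub (π / 2))).fun_add (hsqrt.fun_mul hlog))).fun_sub
      (((((hsqrt.const_mul 4).const_sub 5).fun_add hx).const_mul (π / 2)).fun_mul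
      (((hsqrt.const_mul 2).const_sub 1).fun_sub hx))
  have hden := (hsqrt.fun_div (hx.const_add 1) (by positivity)).fun_mul
      (((hx.const_mul 6).const_sub 25).fun_add (hx.fun_pow 2))
  refine (hnum.fun_div hden (mul_pos (div_pos hs (by positivity)) hQ).ne').congr_deriv ?_
  obtain ⟨s, hs', rfl⟩ : ∃ s, 0 < s ∧ a = s ^ 2 := ⟨√a, hs, (sq_sqrt ha.le).symm⟩
  rw [Psi', sqrt_sq hs'.le]
  have : s ^ 4 - 6 * s ^ 2 + 25 ≠ 0 := by nlinarith [sq_nonneg (s ^ 2 - 3)]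
  field_simp
  ring

noncomputable def Psi'' (a : ℝ) : ℝ :=
  ((-9375 + 13125 * a - 17175 * a ^ 2 + 11013 * a ^ 3 + 923 * a ^ 4 - 585 * a ^ 5 + 27 * a ^ 6 -
        a ^ 7) * arctan √a +
      256 * π * √a * a ^ 2 * (11 - 18 * a + 3 * a ^ 2) +
      64 * √a * a ^ 2 * (117 - 21 * a - 9 * a ^ 2 + a ^ 3) * log ((1 + a) / 4) +
      √a * (a ^ 2 - 6 * a + 25) * (375 - 560 * a + 566 * a ^ 2 - 40 * a ^ 3 - 5 * a ^ 4)) /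
    (4 * √a * a ^ 2 * (a ^ 2 - 6 * a + 25) ^ 3)

theorem hasDerivAt_Psi' {a : ℝ} (ha : 0 < a) : HasDerivAt Psi' (Psi'' a) a := by
  have hs : 0 < √a := sqrt_pos.2 ha
  have hQpos : 0 < a ^ 2 - 6 * a + 25 := by nlinarith [sq_nonneg (a - 3)]
  have hx := hasDerivAt_id' (x := a)
  have hsqrt := hasDerivAt_sqrt ha.ne'
  have hlog := hasDerivAt_log_one_add_div (c := 4) (by positivity : 1 + a ≠ 0) four_ne_zero
  have hQ := ((hx.fun_pow 2).fun_sub (hx.const_mul 6)).add_const 25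
  have hQ2 := hQ.fun_pow 2
  have hT1 := ((((((hx.const_mul 315).const_sub 125).fun_sub ((hx.fun_pow 2).const_mul 254)).fun_add
      ((hx.fun_pow 3).const_mul 170)).fun_sub ((hx.fun_pow 4).const_mul 15)).fun_add
      (hx.fun_pow 5)).fun_div (((hsqrt.fun_pow 3).const_mul 2).fun_mul hQ2) (by positivity)
      |>.fun_mul (hasDerivAt_arctan_sqrt ha)
  have hT2 := ((hx.const_sub 3).const_mul (64 * π)).fun_div hQ2 (by positivity)
  have hT3 := ((((hx.const_mul 96).const_add 112).fun_sub ((hx.fun_pow 2).const_mul 16)).fun_div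
      (hQ2.const_mul 2) (by positivity)).fun_mul hlog
  have hT4 := ((((hx.fun_pow 2).const_mul 3).fun_sub (hx.const_mul 2)).sub_const 5).fun_div
      ((hx.const_mul 2).fun_mul hQ) (by positivity)
  refine (((hT1.fun_add hT2).fun_add hT3).fun_add hT4).congr_deriv ?_
  obtain ⟨s, hs', rfl⟩ : ∃ s, 0 < s ∧ a = s ^ 2 := ⟨√a, hs, (sq_sqrt ha.le).symm⟩
  rw [Psi'', sqrt_sq hs'.le]
  have : (s ^ 2) ^ 2 - 6 * s ^ 2 + 25 ≠ 0 := hQpos.ne'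
  norm_num only [Nat.cast_ofNat, pow_one, mul_one]
  field_simp
  ring

/-- After `arctan √a ≥ √a - √a ^ 3 / 3`, `π < 3.15` and `log ((1 + a) / 4) ≤ (a - 3) / 4`, the
numerator of `Psi'' a` is at most `√a ^ 5` times this polynomial in `a`. -/
theorem Psi''_numerator_bound_neg {u : ℝ} (hu0 : 0 ≤ u) (hu : u < 0.55) :
    -2053 / 5 + 734 / 5 * u + 2241 / 5 * u ^ 2 - 3284 / 3 * u ^ 3 + 233 * u ^ 4 - 10 * u ^ 5 +
      u ^ 6 / 3 < 0 := by
  nlinarith [pow_nonneg hu0 2, pow_nonneg hu0 3, pow_nonneg hu0 4, pow_nonneg hu0 5,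
    pow_nonneg hu0 6]

theorem Psi''_neg {a : ℝ} (ha0 : 0 < a) (ha : a < 0.55) : Psi'' a < 0 := by
  obtain ⟨s, hs, rfl⟩ : ∃ s, 0 < s ∧ a = s ^ 2 := ⟨√a, sqrt_pos.2 ha0, (sq_sqrt ha0.le).symm⟩
  rw [Psi'', sqrt_sq hs.le]
  set a := s ^ 2
  have hQ : 0 < a ^ 2 - 6 * a + 25 := by nlinarith [sq_nonneg (a - 3)]
  refine div_neg_of_neg_of_pos ?_ (by positivity)
  have hcoeff_arctan : -9375 + 13125 * a - 17175 * a ^ 2 + 11013 * a ^ 3 + 923 * a ^ 4 -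
      585 * a ^ 5 + 27 * a ^ 6 - a ^ 7 ≤ 0 := by
    nlinarith [pow_pos ha0 2, pow_pos ha0 3, pow_pos ha0 4, pow_pos ha0 5, pow_pos ha0 6]
  have hcoeff_pi : 0 < 256 * s * a ^ 2 * (11 - 18 * a + 3 * a ^ 2) := by
    have : 0 < 11 - 18 * a + 3 * a ^ 2 := by nlinarith
    positivity
  have hcoeff_log : 0 ≤ 64 * s * a ^ 2 * (117 - 21 * a - 9 * a ^ 2 + a ^ 3) := by
    have : 0 < 117 - 21 * a - 9 * a ^ 2 + a ^ 3 := by nlinarith [pow_pos ha0 3]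
    positivity
  have hlog : log ((1 + a) / 4) ≤ (a - 3) / 4 := by
    linarith [log_le_sub_one_of_pos (by positivity : 0 < (1 + a) / 4)]
  have hbound := Psi''_numerator_bound_neg (u := a) (by positivity) ha
  nlinarith [mul_le_mul_of_nonpos_left (sub_pow_three_div_three_le_arctan hs.le) hcoeff_arctan,
    mul_lt_mul_of_pos_right pi_lt_d2 hcoeff_pi, mul_le_mul_of_nonneg_left hlog hcoeff_log,
    mul_lt_mul_of_pos_left hbound (pow_pos hs 5)]

theorem concaveOn_Psi : ConcaveOn ℝ (Set.Ioo 0 0.55) Psi := by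
  refine concaveOn_of_hasDerivWithinAt2_nonpos (f' := Psi') (f'' := Psi'') (convex_Ioo _ _)
    (fun a ha => (hasDerivAt_Psi ha.1).continuousAt.continuousWithinAt) ?_ ?_ ?_ <;>
    rw [interior_Ioo] <;> intro a ha
  · exact (hasDerivAt_Psi ha.1).hasDerivWithinAt
  · exact (hasDerivAt_Psi' ha.1).hasDerivWithinAt
  · exact (Psi''_neg ha.1 ha.2).le

theorem fGain_one : fGain 1 = 2 * Psi (4 / π - 1) := by
  rw [fGain, sqrt_one, div_one, ← two_mul, one_add_one_eq_two, mul_comm π, ← div_div]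
  norm_num

theorem eight_div_pi_sub_two_lt : 8 / π - 2 < 0.55 := by
  rw [sub_lt_iff_lt_add, div_lt_iff₀ pi_pos]
  nlinarith [pi_gt_d2]

theorem fd_hd_gain_max_at_one (x : ℝ)
    (hx1 : (π / (π - 8)) ^ 2 < x) (hx2 : x < ((π - 8) / π) ^ 2) :
    fGain x ≤ fGain 1 ∧ fGain 1 = 2 * Psi (4 / π - 1) := by
  refine ⟨?_, fGain_one⟩
  have h8 : 0 < 8 - π := by linarith [pi_lt_four]
  have hc : 0 < (8 - π) / π := div_pos h8 pi_pos
  have ht : 0 < √x := sqrt_pos.2 ((sq_nonneg _).trans_lt hx1)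
  have ht_lt : √x < (8 - π) / π := by
    rw [sqrt_lt' hc]
    convert hx2 using 1
    ring
  have hinv_lt : 1 / √x < (8 - π) / π := by
    rw [one_div_lt ht hc, one_div_div, lt_sqrt (div_pos pi_pos h8).le]
    convert hx1 using 1
    rw [← neg_sub, div_neg, neg_sq]
  set A := 8 / (π * (1 + √x)) - 1
  set B := 8 / (π * (1 + 1 / √x)) - 1
  have hA : 0 < A := div_mul_one_add_sub_one_pos pi_pos ht.le ht_lt
  have hB : 0 < B := div_mul_one_add_sub_one_pos pi_pos (by positivity) hinv_lt
  have hsum : A + B = 8 / π - 2 := by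
    simp only [A, B, ← div_div]
    linarith [div_one_add_add_div_one_add_one_div (8 / π) ht]
  have hmid := concaveOn_Psi.add_le_two_mul_map_add_div_two
    (⟨hA, by linarith [eight_div_pi_sub_two_lt]⟩ : A ∈ Set.Ioo 0 0.55)
    (⟨hB, by linarith [eight_div_pi_sub_two_lt]⟩ : B ∈ Set.Ioo 0 0.55)
  rw [hsum, show (8 / π - 2) / 2 = 4 / π - 1 by ring] at hmid
  rwa [fGain, fGain_one]
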